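/- Let I ⊆ ℝ be an interval and let (a,b,c) : I → ℝ³ be a differentiable solution of the gauged bracket Bach flow. Then for every t ∈ I the function t ↦ a(t)² + b(t)² + c(t)² is differentiable and its derivative satisfies d/dt (a² + b² + c²) ≤ −(1/12)·(a(t)² + b(t)² + c(t)²)³. -/

import Mathlib

/-! The derivative of `a² + b² + c²` along the flow is `2 ⟨(a,b,c), F(a,b,c)⟩`, a sextic form which is
bounded pointwise by `-(1/12) (a² + b² + c²)³`. In the variables `x = a², y = b², z = c²` the gap is a
cubic with nonnegative coefficients except for `-15 (x²z + xz²)`, and that term is absorbed by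
`15 (x³ + z³)` since `x³ + z³ - x²z - xz² = (x + z)(x - z)²`. -/

/-- First component of the right-hand side `F` of the gauged bracket Bach flow. -/
noncomputable def Fa (a b c : ℝ) : ℝ :=
  -(a / 48) * (44*a^4 + 72*a^2*b^2 - 5*a^2*c^2 + 28*b^4 + 24*b^2*c^2 - 4*c^4)

/-- Second component of the right-hand side `F` of the gauged bracket Bach flow. -/
noncomputable def Fb (a b c : ℝ) : ℝ :=
  -(b / 48) * (60*a^4 + 104*a^2*b^2 + 57*a^2*c^2 + 44*b^4 + 104*b^2*c^2 + 60*c^4)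

/-- Third component of the right-hand side `F` of the gauged bracket Bach flow. -/
noncomputable def Fc (a b c : ℝ) : ℝ :=
  -(c / 48) * (-4*a^4 + 24*a^2*b^2 - 5*a^2*c^2 + 28*b^4 + 72*b^2*c^2 + 44*c^4)

/-- `(a,b,c) : ℝ → ℝ³` is a differentiable solution of the gauged bracket Bach
flow on the set `S ⊆ ℝ`. -/
def IsBachFlowSolution (a b c : ℝ → ℝ) (S : Set ℝ) : Prop :=
  ∀ t ∈ S,
    HasDerivAt a (Fa (a t) (b t) (c t)) t ∧
    HasDerivAt b (Fb (a t) (b t) (c t)) t ∧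
    HasDerivAt c (Fc (a t) (b t) (c t)) t

theorem HasDerivAt.sq_add_sq_add_sq {𝕜 : Type*} [NontriviallyNormedField 𝕜] {a b c : 𝕜 → 𝕜}
    {a' b' c' t : 𝕜} (ha : HasDerivAt a a' t) (hb : HasDerivAt b b' t) (hc : HasDerivAt c c' t) :
    HasDerivAt (fun s => a s ^ 2 + b s ^ 2 + c s ^ 2)
      (2 * a t * a' + 2 * b t * b' + 2 * c t * c') t := by
  refine (((ha.fun_pow 2).fun_add (hb.fun_pow 2)).fun_add (hc.fun_pow 2)).congr_deriv ?_
  ring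

theorem inner_bachFlow_le (a b c : ℝ) :
    2 * a * Fa a b c + 2 * b * Fb a b c + 2 * c * Fc a b c ≤ -(1/12) * (a^2 + b^2 + c^2) ^ 3 := by
  have gap : 24 * (-(1/12) * (a^2 + b^2 + c^2) ^ 3
        - (2 * a * Fa a b c + 2 * b * Fb a b c + 2 * c * Fc a b c)) =
      15 * (a^2 + c^2) * (a^2 - c^2) ^ 2 + 27 * a^6 + 42 * b^6 + 27 * c^6
        + 126 * (a^4 * b^2 + a^2 * b^4 + b^4 * c^2 + b^2 * c^4) + 93 * a^2 * b^2 * c^2 := by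
    simp only [Fa, Fb, Fc]
    ring
  have gap_nonneg : 0 ≤ 15 * (a^2 + c^2) * (a^2 - c^2) ^ 2 + 27 * a^6 + 42 * b^6 + 27 * c^6
      + 126 * (a^4 * b^2 + a^2 * b^4 + b^4 * c^2 + b^2 * c^4) + 93 * a^2 * b^2 * c^2 := by
    positivity
  linarith

theorem deriv_norm_sq_le_general (I : Set ℝ) (a b c : ℝ → ℝ)
    (hsol : IsBachFlowSolution a b c I) :
    ∀ t ∈ I, ∃ d : ℝ, HasDerivAt (fun s => a s ^ 2 + b s ^ 2 + c s ^ 2) d t ∧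
      d ≤ -(1/12) * (a t ^ 2 + b t ^ 2 + c t ^ 2) ^ 3 := by
  intro t ht
  obtain ⟨ha, hb, hc⟩ := hsol t ht
  exact ⟨_, ha.sq_add_sq_add_sq hb hc, inner_bachFlow_le _ _ _⟩

/-- along a solution of the gauged bracket Bach flow, the squared
norm `a² + b² + c²` is differentiable and
`d/dt (a² + b² + c²) ≤ −(1/12)·(a² + b² + c²)³`. -/
theorem deriv_norm_sq_le (I : Set ℝ) (hI : I.OrdConnected) (a b c : ℝ → ℝ)
    (hsol : IsBachFlowSolution a b c I) :
    ∀ t ∈ I, ∃ d : ℝ, HasDerivAt (fun s => a s ^ 2 + b s ^ 2 + c s ^ 2) d t ∧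
      d ≤ -(1/12) * (a t ^ 2 + b t ^ 2 + c t ^ 2) ^ 3 :=
  deriv_norm_sq_le_general I a b c hsol
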